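/- arXiv:2108.02489 — 4 statements merged into one kernel-verified Lean document; each statement's English description precedes it below -/
import Mathlib

section
/- Let λ, β, μ, μ', α > 0, γ ∈ [0,1], ρ ∈ [0,1], and set R₀ := βλ/((μ+γλ)(μ+μ'+α)). Suppose S ≥ 0 and I > 0 satisfy λ − μS − βSI/(1+γS) = 0 and −(μ+μ')I + βSI/(1+γS) − αI/(1+ρI) = 0. Then a·I³ + b·I² + c·I + d = 0, where a := ρ²(μ+μ')((μ+μ')γ − β), b := ρ²(μ+γλ)((μ+μ'+α)(R₀−1)+α) + ραβ + 2ρ(μ+μ'+α)((μ+μ')γ−β), c := 2ρ(μ+γλ)(μ+μ'+α)(R₀−1) + (μ+μ'+α)((μ+μ')γ−β) + γα(μ+μ'+α) + ρα(μ+γλ), and d := (μ+γλ)(μ+μ'+α)(R₀−1). -/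
/-- The infected coordinate `I` of any endemic equilibrium of the reduced model satisfies
the cubic equation `a·I³ + b·I² + c·I + d = 0` with the coefficients of the paper. -/
theorem endemic_cubic
    (lam β μ μ' α γ ρ S I : ℝ)
    (hlam : 0 < lam) (hβ : 0 < β) (hμ : 0 < μ) (hμ' : 0 < μ') (hα : 0 < α)
    (hγ : γ ∈ Set.Icc (0:ℝ) 1) (hρ : ρ ∈ Set.Icc (0:ℝ) 1)
    (hS : 0 ≤ S) (hI : 0 < I)
    (h1 : lam - μ * S - β * S * I / (1 + γ * S) = 0)
    (h2 : -(μ + μ') * I + β * S * I / (1 + γ * S) - α * I / (1 + ρ * I) = 0) :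
    let R₀ : ℝ := β * lam / ((μ + γ * lam) * (μ + μ' + α))
    let a : ℝ := ρ ^ 2 * (μ + μ') * ((μ + μ') * γ - β)
    let b : ℝ := ρ ^ 2 * (μ + γ * lam) * ((μ + μ' + α) * (R₀ - 1) + α) + ρ * α * β
      + 2 * ρ * (μ + μ' + α) * ((μ + μ') * γ - β)
    let c : ℝ := 2 * ρ * (μ + γ * lam) * (μ + μ' + α) * (R₀ - 1)
      + (μ + μ' + α) * ((μ + μ') * γ - β) + γ * α * (μ + μ' + α) + ρ * α * (μ + γ * lam)
    let d : ℝ := (μ + γ * lam) * (μ + μ' + α) * (R₀ - 1)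
    a * I ^ 3 + b * I ^ 2 + c * I + d = 0 := by

  have hγ0 := hγ.1
  have hρ0 := hρ.1
  have hd1 : (1 + γ * S) ≠ 0 := by nlinarith [mul_nonneg hγ0 hS]
  have hd2 : (1 + ρ * I) ≠ 0 := by nlinarith [mul_nonneg hρ0 hI.le]
  have hK : (μ + γ * lam) ≠ 0 := by nlinarith [mul_nonneg hγ0 hlam.le]
  have hT : (μ + μ' + α) ≠ 0 := by positivity
  intro R₀ a b c d
  have hR : (μ + γ * lam) * (μ + μ' + α) * (R₀ - 1)
      = β * lam - (μ + γ * lam) * (μ + μ' + α) := by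
    show (μ + γ * lam) * (μ + μ' + α) * (β * lam / ((μ + γ * lam) * (μ + μ' + α)) - 1)
      = β * lam - (μ + γ * lam) * (μ + μ' + α)
    field_simp
  have e1 : (lam - μ * S) * (1 + γ * S) - β * S * I = 0 := by
    field_simp at h1
    linarith
  have e2I : (β * S * (1 + ρ * I) - (μ + μ') * (1 + γ * S) * (1 + ρ * I)
      - α * (1 + γ * S)) * I = 0 := by
    field_simp at h2
    linarith
  have e2 : β * S * (1 + ρ * I) - (μ + μ') * (1 + γ * S) * (1 + ρ * I)
      - α * (1 + γ * S) = 0 := by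
    rcases mul_eq_zero.mp e2I with h | h
    · exact h
    · exact absurd h hI.ne'
  have key : β * (a * I ^ 3 + b * I ^ 2 + c * I + d) = 0 := by
    show β * (ρ ^ 2 * (μ + μ') * ((μ + μ') * γ - β) * I ^ 3
      + (ρ ^ 2 * (μ + γ * lam) * ((μ + μ' + α) * (R₀ - 1) + α) + ρ * α * β
        + 2 * ρ * (μ + μ' + α) * ((μ + μ') * γ - β)) * I ^ 2
      + (2 * ρ * (μ + γ * lam) * (μ + μ' + α) * (R₀ - 1)
        + (μ + μ' + α) * ((μ + μ') * γ - β) + γ * α * (μ + μ' + α)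
        + ρ * α * (μ + γ * lam)) * I
      + (μ + γ * lam) * (μ + μ' + α) * (R₀ - 1)) = 0
    linear_combination
      ((β - (μ + μ') * γ) * (1 + ρ * I) - α * γ) ^ 2 * e1
      + (μ * γ * (2 * ((μ + μ') * (1 + ρ * I) + α)
          + (β * S * (1 + ρ * I) - (μ + μ') * (1 + γ * S) * (1 + ρ * I) - α * (1 + γ * S)))
        - (lam * γ - μ - β * I) * ((β - (μ + μ') * γ) * (1 + ρ * I) - α * γ)) * e2
      + β * (1 + ρ * I) ^ 2 * hR
  exact (mul_eq_zero.mp key).resolve_left hβ.ne'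
end

section
/- Let λ, β, μ, μ', α > 0, γ ∈ [0,1], ρ ∈ (0,1], and set R₀ := βλ/((μ+γλ)(μ+μ'+α)). If R₀ > 1, then the cubic polynomial p(I) = a·I³ + b·I² + c·I + d (with a, b, c, d the endemic-equilibrium cubic coefficients) satisfies a < 0 and d > 0, and hence p has at least one positive real root. -/
/-- A cubic with negative leading coefficient and positive constant term has a
positive real root. -/
lemma cubic_root_aux (a b c d : ℝ) (ha : a < 0) (hd : 0 < d) :
    ∃ I : ℝ, 0 < I ∧ a * I ^ 3 + b * I ^ 2 + c * I + d = 0 := by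
  set f : ℝ → ℝ := fun x => a * x ^ 3 + b * x ^ 2 + c * x + d with hf
  have hcont : Continuous f := by fun_prop
  set M : ℝ := |b| + |c| + |d| with hM
  have hM0 : 0 ≤ M := by positivity
  set x : ℝ := max 1 ((M + 1) / (-a)) with hx
  have hx1 : (1:ℝ) ≤ x := le_max_left _ _
  have hx0 : 0 < x := lt_of_lt_of_le one_pos hx1
  have hax : a * x ≤ -(M + 1) := by
    have h2 : (M + 1) / (-a) ≤ x := le_max_right _ _
    have hna : 0 < -a := by linarith
    have := (div_le_iff₀ hna).mp h2
    nlinarith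
  have hfx : f x < 0 := by
    have h1 : b * x ^ 2 ≤ |b| * x ^ 2 := by nlinarith [le_abs_self b, sq_nonneg x]
    have hx2 : 1 ≤ x ^ 2 := by nlinarith
    have h2 : c * x ≤ |c| * x ^ 2 := by
      nlinarith [mul_le_mul_of_nonneg_right (le_abs_self c) hx0.le,
        mul_nonneg (mul_nonneg (abs_nonneg c) hx0.le) (sub_nonneg.mpr hx1)]
    have h3 : d ≤ |d| * x ^ 2 := by
      nlinarith [le_abs_self d, mul_nonneg (abs_nonneg d) (by linarith : (0:ℝ) ≤ x ^ 2 - 1)]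
    have h4 : a * x ^ 3 = (a * x) * x ^ 2 := by ring
    have h5 : f x ≤ (a * x + M) * x ^ 2 := by
      simp only [hf]
      nlinarith [sq_nonneg x]
    have h6 : (a * x + M) * x ^ 2 ≤ (-1) * x ^ 2 := by nlinarith [sq_nonneg x]
    nlinarith
  have hf0 : f 0 = d := by simp [hf]
  have hsub : Set.Icc (f x) (f 0) ⊆ f '' Set.Icc 0 x :=
    intermediate_value_Icc' (le_of_lt hx0) hcont.continuousOn
  have hmem : (0:ℝ) ∈ Set.Icc (f x) (f 0) := ⟨hfx.le, by rw [hf0]; exact hd.le⟩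
  obtain ⟨I, hI, hfI⟩ := hsub hmem
  refine ⟨I, ?_, hfI⟩
  rcases lt_or_eq_of_le hI.1 with h | h
  · exact h
  · exfalso; rw [← h] at hfI; rw [hf0] at hfI; linarith

/-- If `R₀ > 1` (with `ρ ∈ (0,1]`), the endemic-equilibrium cubic has a negative leading
coefficient `a` and a positive constant coefficient `d`, hence at least one positive real
root. -/
theorem cubic_positive_root_of_R0_gt_one
    (lam β μ μ' α γ ρ : ℝ)
    (hlam : 0 < lam) (hβ : 0 < β) (hμ : 0 < μ) (hμ' : 0 < μ') (hα : 0 < α)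
    (hγ : γ ∈ Set.Icc (0:ℝ) 1) (hρ : ρ ∈ Set.Ioc (0:ℝ) 1) :
    let R₀ : ℝ := β * lam / ((μ + γ * lam) * (μ + μ' + α))
    let a : ℝ := ρ ^ 2 * (μ + μ') * ((μ + μ') * γ - β)
    let b : ℝ := ρ ^ 2 * (μ + γ * lam) * ((μ + μ' + α) * (R₀ - 1) + α) + ρ * α * β
      + 2 * ρ * (μ + μ' + α) * ((μ + μ') * γ - β)
    let c : ℝ := 2 * ρ * (μ + γ * lam) * (μ + μ' + α) * (R₀ - 1)
      + (μ + μ' + α) * ((μ + μ') * γ - β) + γ * α * (μ + μ' + α) + ρ * α * (μ + γ * lam)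
    let d : ℝ := (μ + γ * lam) * (μ + μ' + α) * (R₀ - 1)
    1 < R₀ →
      a < 0 ∧ 0 < d ∧ ∃ I : ℝ, 0 < I ∧ a * I ^ 3 + b * I ^ 2 + c * I + d = 0 := by
  intro R₀ a b c d hR
  obtain ⟨hγ0, hγ1⟩ := hγ
  obtain ⟨hρ0, hρ1⟩ := hρ
  have hden : 0 < (μ + γ * lam) * (μ + μ' + α) := by positivity
  have hkey : (μ + γ * lam) * (μ + μ' + α) < β * lam := by
    have := (one_lt_div hden).mp hR
    linarith [this]
  -- β > (μ+μ')γ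
  have hneg : (μ + μ') * γ - β < 0 := by
    by_contra h
    push_neg at h
    nlinarith [mul_nonneg h hlam.le, mul_pos hμ (show (0:ℝ) < μ + μ' + α by linarith),
      mul_nonneg (mul_nonneg hγ0 hlam.le) hα.le]
  have ha : a < 0 := by
    have : 0 < ρ ^ 2 * (μ + μ') := by positivity
    exact mul_neg_of_pos_of_neg this hneg
  have hd : 0 < d := by
    have : 0 < R₀ - 1 := by linarith
    positivity
  exact ⟨ha, hd, cubic_root_aux a b c d ha hd⟩
end

section
/- Let λ, β, μ, μ', α > 0 and ρ ∈ [0,1], and suppose μ(μ+μ'+α)³ ≠ αβλ²ρ. Define γ as a function of R by γ(R) := β/(R(μ+μ'+α)) − μ/λ, and define Φ(R, I) := a(R)·I³ + b(R)·I² + c(R)·I + d(R), where a(R), b(R), c(R), d(R) are the endemic-equilibrium cubic coefficients with γ replaced by γ(R) and R₀ replaced by R. Then ∂Φ/∂I at (R,I) = (1,0) is nonzero, and −(∂Φ/∂R)/(∂Φ/∂I) evaluated at (1,0) equals βλ²(μ+μ'+α)/(μ(μ+μ'+α)³ − αβλ²ρ). In particular this implicit derivative ∂I/∂R₀ at (R₀,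 I) = (1,0) is positive (forward bifurcation) when β < μ(μ+μ'+α)³/(αλ²ρ) and negative (backward bifurcation) when β > μ(μ+μ'+α)³/(αλ²ρ). -/
/-!
The constant coefficient `d(R)` carries the factor `R − 1`, so
`∂Φ/∂R (1,0) = d'(1) = (μ + γ(1)λ)(μ+μ'+α) = βλ`, while `∂Φ/∂I (1,0)` is the linear coefficient
`c(1) = (αβλ²ρ − μ(μ+μ'+α)³)/(λ(μ+μ'+α))`. The implicit derivative is their negated quotient,
and its sign is the sign of `μ(μ+μ'+α)³ − αβλ²ρ`.
-/

theorem deriv_cubic_at_zero {𝕜 : Type*} [NontriviallyNormedField 𝕜] (a b c d : 𝕜) :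
    deriv (fun x : 𝕜 => a * x ^ 3 + b * x ^ 2 + c * x + d) 0 = c := by
  have h : HasDerivAt (fun x : 𝕜 => a * x ^ 3 + b * x ^ 2 + c * x + d)
      (a * (3 * 0 ^ 2) + b * (2 * 0 ^ 1) + c * 1) 0 :=
    ((((hasDerivAt_pow 3 0).const_mul a).add ((hasDerivAt_pow 2 0).const_mul b)).add
      ((hasDerivAt_id 0).const_mul c)).add_const d
  simpa using h.deriv

theorem hasDerivAt_mul_sub_self {𝕜 : Type*} [NontriviallyNormedField 𝕜] {f : 𝕜 → 𝕜} {x₀ : 𝕜}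
    (hf : DifferentiableAt 𝕜 f x₀) : HasDerivAt (fun x => f x * (x - x₀)) (f x₀) x₀ := by
  have h := hf.hasDerivAt.mul ((hasDerivAt_id' x₀).sub_const x₀)
  rwa [sub_self, mul_zero, mul_one, zero_add] at h

theorem forward_backward_bifurcation_general
    (lam β μ μ' α ρ : ℝ)
    (hlam : 0 < lam) (hβ : 0 < β) (hμ : 0 < μ) (hμ' : 0 < μ') (hα : 0 < α)
    (hne : μ * (μ + μ' + α) ^ 3 ≠ α * β * lam ^ 2 * ρ) :
    let γ : ℝ → ℝ := fun R => β / (R * (μ + μ' + α)) - μ / lam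
    let a : ℝ → ℝ := fun R => ρ ^ 2 * (μ + μ') * ((μ + μ') * γ R - β)
    let b : ℝ → ℝ := fun R =>
      ρ ^ 2 * (μ + γ R * lam) * ((μ + μ' + α) * (R - 1) + α) + ρ * α * β
        + 2 * ρ * (μ + μ' + α) * ((μ + μ') * γ R - β)
    let c : ℝ → ℝ := fun R =>
      2 * ρ * (μ + γ R * lam) * (μ + μ' + α) * (R - 1)
        + (μ + μ' + α) * ((μ + μ') * γ R - β) + γ R * α * (μ + μ' + α)
        + ρ * α * (μ + γ R * lam)
    let d : ℝ → ℝ := fun R => (μ + γ R * lam) * (μ + μ' + α) * (R - 1)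
    let Φ : ℝ → ℝ → ℝ := fun R I => a R * I ^ 3 + b R * I ^ 2 + c R * I + d R
    deriv (fun I => Φ 1 I) 0 ≠ 0 ∧
    -(deriv (fun R => Φ R 0) 1) / deriv (fun I => Φ 1 I) 0
      = β * lam ^ 2 * (μ + μ' + α) / (μ * (μ + μ' + α) ^ 3 - α * β * lam ^ 2 * ρ) ∧
    (α * β * lam ^ 2 * ρ < μ * (μ + μ' + α) ^ 3 →
      0 < -(deriv (fun R => Φ R 0) 1) / deriv (fun I => Φ 1 I) 0) ∧
    (μ * (μ + μ' + α) ^ 3 < α * β * lam ^ 2 * ρ →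
      -(deriv (fun R => Φ R 0) 1) / deriv (fun I => Φ 1 I) 0 < 0) := by
  intro γ a b c d Φ
  have hD : μ * (μ + μ' + α) ^ 3 - α * β * lam ^ 2 * ρ ≠ 0 := sub_ne_zero.mpr hne
  have hI : deriv (fun I => Φ 1 I) 0
      = -(μ * (μ + μ' + α) ^ 3 - α * β * lam ^ 2 * ρ) / (lam * (μ + μ' + α)) := by
    rw [deriv_cubic_at_zero]
    simp only [c, γ]
    field_simp
    ring
  have hR : deriv (fun R => Φ R 0) 1 = β * lam := by
    have hγ : DifferentiableAt ℝ γ 1 := by fun_prop (disch := positivity)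
    have hd := hasDerivAt_mul_sub_self (f := fun R => (μ + γ R * lam) * (μ + μ' + α))
      (by fun_prop)
    simp only [Φ, d, zero_pow three_ne_zero, zero_pow two_ne_zero, mul_zero, zero_add]
    rw [hd.deriv]
    simp only [γ]
    field_simp
    ring
  have hquot : -(deriv (fun R => Φ R 0) 1) / deriv (fun I => Φ 1 I) 0
      = β * lam ^ 2 * (μ + μ' + α) / (μ * (μ + μ' + α) ^ 3 - α * β * lam ^ 2 * ρ) := by
    rw [hI, hR]
    field_simp
  refine ⟨hI ▸ div_ne_zero (neg_ne_zero.mpr hD) (by positivity), hquot, fun h => ?_, fun h => ?_⟩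
  · exact hquot ▸ div_pos (by positivity) (by linarith)
  · exact hquot ▸ div_neg_of_pos_of_neg (by positivity) (by linarith)

/-- Direction of the transcritical bifurcation at `R₀ = 1`: with `γ` eliminated via
`γ(R) = β/(R(μ+μ'+α)) − μ/λ` and `Φ(R,I)` the endemic-equilibrium cubic, the implicit
derivative `∂I/∂R₀ = −(∂Φ/∂R)/(∂Φ/∂I)` at `(R,I) = (1,0)` equals
`βλ²(μ+μ'+α)/(μ(μ+μ'+α)³ − αβλ²ρ)`; it is positive (forward bifurcation) when
`αβλ²ρ < μ(μ+μ'+α)³`, i.e. `β < μ(μ+μ'+α)³/(αλ²ρ)`, and negative (backward bifurcation)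
when `αβλ²ρ > μ(μ+μ'+α)³`, i.e. `β > μ(μ+μ'+α)³/(αλ²ρ)`. -/
theorem forward_backward_bifurcation
    (lam β μ μ' α ρ : ℝ)
    (hlam : 0 < lam) (hβ : 0 < β) (hμ : 0 < μ) (hμ' : 0 < μ') (hα : 0 < α)
    (hρ : ρ ∈ Set.Icc (0:ℝ) 1)
    (hne : μ * (μ + μ' + α) ^ 3 ≠ α * β * lam ^ 2 * ρ) :
    let γ : ℝ → ℝ := fun R => β / (R * (μ + μ' + α)) - μ / lam
    let a : ℝ → ℝ := fun R => ρ ^ 2 * (μ + μ') * ((μ + μ') * γ R - β)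
    let b : ℝ → ℝ := fun R =>
      ρ ^ 2 * (μ + γ R * lam) * ((μ + μ' + α) * (R - 1) + α) + ρ * α * β
        + 2 * ρ * (μ + μ' + α) * ((μ + μ') * γ R - β)
    let c : ℝ → ℝ := fun R =>
      2 * ρ * (μ + γ R * lam) * (μ + μ' + α) * (R - 1)
        + (μ + μ' + α) * ((μ + μ') * γ R - β) + γ R * α * (μ + μ' + α)
        + ρ * α * (μ + γ R * lam)
    let d : ℝ → ℝ := fun R => (μ + γ R * lam) * (μ + μ' + α) * (R - 1)
    let Φ : ℝ → ℝ → ℝ := fun R I => a R * I ^ 3 + b R * I ^ 2 + c R * I + d R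
    deriv (fun I => Φ 1 I) 0 ≠ 0 ∧
    -(deriv (fun R => Φ R 0) 1) / deriv (fun I => Φ 1 I) 0
      = β * lam ^ 2 * (μ + μ' + α) / (μ * (μ + μ' + α) ^ 3 - α * β * lam ^ 2 * ρ) ∧
    (α * β * lam ^ 2 * ρ < μ * (μ + μ' + α) ^ 3 →
      0 < -(deriv (fun R => Φ R 0) 1) / deriv (fun I => Φ 1 I) 0) ∧
    (μ * (μ + μ' + α) ^ 3 < α * β * lam ^ 2 * ρ →
      -(deriv (fun R => Φ R 0) 1) / deriv (fun I => Φ 1 I) 0 < 0) :=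
  forward_backward_bifurcation_general lam β μ μ' α ρ hlam hβ hμ hμ' hα hne
end

section
/- Let λ, β, μ, μ', α > 0 and γ, ρ ∈ [0,1]. Define g(S,I) := (1+γS)(1+ρI), f₁(S,I) := λ − μS − βSI/(1+γS), and f₂(S,I) := −(μ+μ')I + βSI/(1+γS) − αI/(1+ρI). Then for all S ≥ 0, I ≥ 0: ∂(g·f₁)/∂S + ∂(g·f₂)/∂I = ã·I² + b̃·SI + c̃·S + d̃·I + ẽ, where ã := −βρ, b̃ := −4γμρ − 2γμ'ρ + 2βρ, c̃ := −αγ − 3γμ − γμ' + β, d̃ := γλρ − 3μρ − 2μ'ρ − β, ẽ := γλ − α − 2μ − μ'. -/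
/-!
Multiplying by the Dulac function clears both denominators: near any point with
`1 + γS > 0` and `1 + ρI > 0`, `g·f₁` and `g·f₂` agree with polynomials in the variable being
differentiated, so the divergence is a polynomial computation.
-/

open Filter Topology

theorem HasDerivAt.mul_sub_div_cancel {𝕜 : Type*} [NontriviallyNormedField 𝕜]
    {u p q : 𝕜 → 𝕜} {u' p' q' x : 𝕜} (hu : HasDerivAt u u' x) (hp : HasDerivAt p p' x)
    (hq : HasDerivAt q q' x) (hx : u x ≠ 0) :
    HasDerivAt (fun s => u s * (p s - q s / u s)) (u' * p x + u x * p' - q') x := by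
  have hne : ∀ᶠ s in 𝓝 x, u s ≠ 0 := hu.continuousAt.eventually_ne hx
  refine ((hu.mul hp).sub hq).congr_of_eventuallyEq ?_
  filter_upwards [hne] with s hs
  rw [mul_sub, mul_div_cancel₀ _ hs]
  rfl

def dulac (γ ρ S I : ℝ) : ℝ := (1 + γ * S) * (1 + ρ * I)

noncomputable def f₁ (lam β μ γ S I : ℝ) : ℝ := lam - μ * S - β * S * I / (1 + γ * S)

noncomputable def f₂ (β μ μ' α γ ρ S I : ℝ) : ℝ :=
  -(μ + μ') * I + β * S * I / (1 + γ * S) - α * I / (1 + ρ * I)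

section

variable (lam β μ μ' α γ ρ : ℝ) {S I : ℝ}

theorem hasDerivAt_dulac_mul_f₁ (hS : 1 + γ * S ≠ 0) :
    HasDerivAt (fun s => dulac γ ρ s I * f₁ lam β μ γ s I)
      ((1 + ρ * I) * (γ * (lam - μ * S) + (1 + γ * S) * -μ - β * I)) S := by
  have hu : HasDerivAt (fun s => 1 + γ * s) γ S := by
    simpa using ((hasDerivAt_id S).const_mul γ).const_add 1
  have hp : HasDerivAt (fun s => lam - μ * s) (-μ) S := by
    simpa using ((hasDerivAt_id S).const_mul μ).const_sub lam
  have hq : HasDerivAt (fun s => β * s * I) (β * I) S := by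
    simpa using ((hasDerivAt_id S).const_mul β).mul_const I
  refine ((hu.mul_sub_div_cancel hp hq hS).const_mul (1 + ρ * I)).congr_of_eventuallyEq
    (.of_forall fun s => ?_)
  simp only [dulac, f₁]
  ring

theorem hasDerivAt_dulac_mul_f₂ (hI : 1 + ρ * I ≠ 0) :
    let c := -(μ + μ') + β * S / (1 + γ * S)
    HasDerivAt (fun i => dulac γ ρ S i * f₂ β μ μ' α γ ρ S i)
      ((1 + γ * S) * (ρ * (c * I) + (1 + ρ * I) * c - α)) I := by
  intro c
  have hu : HasDerivAt (fun i => 1 + ρ * i) ρ I := by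
    simpa using ((hasDerivAt_id I).const_mul ρ).const_add 1
  have hp : HasDerivAt (fun i => c * i) c I := by
    simpa using (hasDerivAt_id I).const_mul c
  have hq : HasDerivAt (fun i => α * i) α I := by
    simpa using (hasDerivAt_id I).const_mul α
  refine ((hu.mul_sub_div_cancel hp hq hI).const_mul (1 + γ * S)).congr_of_eventuallyEq
    (.of_forall fun i => ?_)
  simp only [dulac, f₂, c]
  ring

end

theorem dulac_divergence_general
    (lam β μ μ' α γ ρ : ℝ)
    (hγ : γ ∈ Set.Icc (0:ℝ) 1) (hρ : ρ ∈ Set.Icc (0:ℝ) 1) :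
    ∀ S I : ℝ, 0 ≤ S → 0 ≤ I →
      deriv (fun s => (1 + γ * s) * (1 + ρ * I) *
          (lam - μ * s - β * s * I / (1 + γ * s))) S
      + deriv (fun i => (1 + γ * S) * (1 + ρ * i) *
          (-(μ + μ') * i + β * S * i / (1 + γ * S) - α * i / (1 + ρ * i))) I
      = (-(β * ρ)) * I ^ 2
        + (-(4 * γ * μ * ρ) - 2 * γ * μ' * ρ + 2 * β * ρ) * (S * I)
        + (-(α * γ) - 3 * γ * μ - γ * μ' + β) * S
        + (γ * lam * ρ - 3 * μ * ρ - 2 * μ' * ρ - β) * I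
        + (γ * lam - α - 2 * μ - μ') := by
  intro S I hS hI
  have hγS : 1 + γ * S ≠ 0 := by nlinarith [mul_nonneg hγ.1 hS]
  have hρI : 1 + ρ * I ≠ 0 := by nlinarith [mul_nonneg hρ.1 hI]
  show deriv (fun s => dulac γ ρ s I * f₁ lam β μ γ s I) S
      + deriv (fun i => dulac γ ρ S i * f₂ β μ μ' α γ ρ S i) I = _
  rw [(hasDerivAt_dulac_mul_f₁ lam β μ γ ρ hγS).deriv,
    (hasDerivAt_dulac_mul_f₂ β μ μ' α γ ρ hρI).deriv]
  field_simp
  ring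

/-- Dulac divergence computation: with `g(S,I) = (1+γS)(1+ρI)` and `f₁`, `f₂` the
right-hand sides of the reduced model, `∂(g·f₁)/∂S + ∂(g·f₂)/∂I` equals the quadratic
`ã·I² + b̃·SI + c̃·S + d̃·I + ẽ` with the coefficients of the paper. -/
theorem dulac_divergence
    (lam β μ μ' α γ ρ : ℝ)
    (hlam : 0 < lam) (hβ : 0 < β) (hμ : 0 < μ) (hμ' : 0 < μ') (hα : 0 < α)
    (hγ : γ ∈ Set.Icc (0:ℝ) 1) (hρ : ρ ∈ Set.Icc (0:ℝ) 1) :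
    ∀ S I : ℝ, 0 ≤ S → 0 ≤ I →
      deriv (fun s => (1 + γ * s) * (1 + ρ * I) *
          (lam - μ * s - β * s * I / (1 + γ * s))) S
      + deriv (fun i => (1 + γ * S) * (1 + ρ * i) *
          (-(μ + μ') * i + β * S * i / (1 + γ * S) - α * i / (1 + ρ * i))) I
      = (-(β * ρ)) * I ^ 2
        + (-(4 * γ * μ * ρ) - 2 * γ * μ' * ρ + 2 * β * ρ) * (S * I)
        + (-(α * γ) - 3 * γ * μ - γ * μ' + β) * S
        + (γ * lam * ρ - 3 * μ * ρ - 2 * μ' * ρ - β) * I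
        + (γ * lam - α - 2 * μ - μ') :=
  dulac_divergence_general lam β μ μ' α γ ρ hγ hρ
end
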